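/- Let T₁(x) = −2x ln x on (0,1]. The unique solution T₂ on [0,1] of (1/2)·x·T₂''(x) = −2·T₁(x) for 0 < x < 1 with T₂(0) = T₂(1) = 0 satisfies T₂(x) − T₁(x)² = 4x² ln x − 4x²(ln x)² + 6x(1 − x). -/

import Mathlib

/-!
On `(0, 1)` the equation reads `T₂'' = 8 log x`, which is also solved by
`4 x² log x - 6 x² + 6 x`; this function vanishes at `0` and `1`, and subtracting
`T₁² = 4 x² (log x)²` from it gives the displayed closed form. The difference of the two solutions has zero second derivative, so it is
affine on `(0, 1)`, hence by continuity on `[0, 1]`, and an affine function vanishing at both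
endpoints is zero.
-/

open Set Real

theorem IsOpen.exists_eqOn_affine_of_hasDerivAt_hasDerivAt_zero {s : Set ℝ} (hs : IsOpen s)
    (hs' : IsPreconnected s) {g g' : ℝ → ℝ} (hg : ∀ x ∈ s, HasDerivAt g (g' x) x)
    (hg' : ∀ x ∈ s, HasDerivAt g' 0 x) : ∃ c d : ℝ, EqOn g (fun x => c * x + d) s := by
  obtain ⟨c, hc⟩ := hs.exists_is_const_of_deriv_eq_zero hs'
    (fun x hx => (hg' x hx).differentiableAt.differentiableWithinAt)
    (fun x hx => (hg' x hx).deriv)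
  obtain ⟨d, hd⟩ := hs.exists_eq_add_of_deriv_eq hs'
    (fun x hx => (hg x hx).differentiableAt.differentiableWithinAt)
    ((differentiable_id.const_mul c).differentiableOn)
    (fun x hx => by simp [(hg x hx).deriv, hc x hx])
  exact ⟨c, d, hd⟩

theorem eqOn_zero_of_hasDerivAt_hasDerivAt_zero {a b : ℝ} (hab : a < b) {g g' : ℝ → ℝ}
    (hcont : ContinuousOn g (Icc a b)) (hg : ∀ x ∈ Ioo a b, HasDerivAt g (g' x) x)
    (hg' : ∀ x ∈ Ioo a b, HasDerivAt g' 0 x) (ha : g a = 0) (hb : g b = 0) :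
    EqOn g 0 (Icc a b) := by
  obtain ⟨c, d, hcd⟩ :=
    isOpen_Ioo.exists_eqOn_affine_of_hasDerivAt_hasDerivAt_zero isPreconnected_Ioo hg hg'
  have haffine : EqOn g (fun x => c * x + d) (Icc a b) :=
    hcd.of_subset_closure hcont (by fun_prop) Ioo_subset_Icc_self
      (closure_Ioo hab.ne).superset
  have ha' := (haffine (left_mem_Icc.2 hab.le)).symm.trans ha
  have hb' := (haffine (right_mem_Icc.2 hab.le)).symm.trans hb
  have hc : c = 0 := by
    have : c * (b - a) = 0 := by linarith
    exact (mul_eq_zero.1 this).resolve_right (sub_ne_zero.2 hab.ne')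
  have hd : d = 0 := by
    subst hc
    linarith
  intro x hx
  simp [haffine hx, hc, hd]

noncomputable def secondMoment (x : ℝ) : ℝ := 4 * x ^ 2 * log x - 6 * x ^ 2 + 6 * x

theorem continuous_secondMoment : Continuous secondMoment := by
  -- grouped around `x * log x`, which is continuous at `0` although `log` is not
  have h : Continuous fun x : ℝ => 4 * (x * (x * log x)) - 6 * x ^ 2 + 6 * x := by fun_prop
  exact h.congr fun x => by rw [secondMoment]; ring

theorem hasDerivAt_secondMoment {x : ℝ} (hx : x ≠ 0) :
    HasDerivAt secondMoment (8 * x * log x - 8 * x + 6) x :=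
  ((((hasDerivAt_pow 2 x).const_mul 4).fun_mul (hasDerivAt_log hx)).fun_sub
    ((hasDerivAt_pow 2 x).const_mul 6)).fun_add ((hasDerivAt_id' x).const_mul 6)
    |>.congr_deriv (by field_simp; ring)

theorem hasDerivAt_deriv_secondMoment {x : ℝ} (hx : x ≠ 0) :
    HasDerivAt (fun x => 8 * x * log x - 8 * x + 6) (8 * log x) x :=
  ((((hasDerivAt_id' x).const_mul 8).fun_mul (hasDerivAt_log hx)).fun_sub
    ((hasDerivAt_id' x).const_mul 8)).add_const 6 |>.congr_deriv (by field_simp; ring)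

/-- With T₁(x) = −2 x ln x, any solution T₂ of (1/2) x T₂''(x) = −2 T₁(x) on (0,1)
with T₂(0) = T₂(1) = 0 satisfies
T₂(x) − T₁(x)² = 4 x² ln x − 4 x² (ln x)² + 6 x (1 − x). -/
theorem stmt_7 (T₂ T₂' T₂'' : ℝ → ℝ)
    (hcont : ContinuousOn T₂ (Icc 0 1))
    (hderiv : ∀ x ∈ Ioo (0 : ℝ) 1, HasDerivAt T₂ (T₂' x) x)
    (hderiv2 : ∀ x ∈ Ioo (0 : ℝ) 1, HasDerivAt T₂' (T₂'' x) x)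
    (hode : ∀ x ∈ Ioo (0 : ℝ) 1,
      (1 / 2) * x * T₂'' x = -2 * (-2 * x * Real.log x))
    (hbc0 : T₂ 0 = 0) (hbc1 : T₂ 1 = 0) :
    ∀ x ∈ Icc (0 : ℝ) 1,
      T₂ x - (-2 * x * Real.log x) ^ 2 =
        4 * x ^ 2 * Real.log x - 4 * x ^ 2 * (Real.log x) ^ 2 + 6 * x * (1 - x) := by
  have hT₂'' : ∀ x ∈ Ioo (0 : ℝ) 1, T₂'' x = 8 * log x := fun x hx =>
    mul_left_cancel₀ hx.1.ne' (by linarith [hode x hx])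
  have hdiff : EqOn (T₂ - secondMoment) 0 (Icc 0 1) :=
    eqOn_zero_of_hasDerivAt_hasDerivAt_zero (g' := T₂' - fun x => 8 * x * log x - 8 * x + 6)
      zero_lt_one (hcont.sub continuous_secondMoment.continuousOn)
      (fun x hx => (hderiv x hx).sub (hasDerivAt_secondMoment hx.1.ne'))
      (fun x hx => ((hderiv2 x hx).sub (hasDerivAt_deriv_secondMoment hx.1.ne')).congr_deriv
        (by rw [hT₂'' x hx, sub_self]))
      (by simp [hbc0, secondMoment]) (by simp [hbc1, secondMoment])
  intro x hx
  rw [sub_eq_zero.1 (hdiff hx), secondMoment]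
  ring
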